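/- arXiv:1701.06237 — 5 statements merged into one kernel-verified Lean document; each statement's English description precedes it below -/
import Mathlib

section
/- Let c ≥ 0 and n ∈ ℝ^d a unit vector, and let P be the projection P(v) = v if v·n ≤ c, P(v) = v - (v·n)n + cn otherwise. Then the function E : ℝ^d → ℝ defined by E(w) = w·P(w) - (1/2)|P(w)|² is convex, i.e., for all w₀, w₁ ∈ ℝ^d and s ∈ [0,1], E((1-s)w₀ + s w₁) ≤ (1-s)E(w₀) + s E(w₁). -/
/-!
`E w = ⟪w, P w⟫ - ½‖P w‖²` equals `½‖w‖² - ½‖w - P w‖²`, and `P w` is the point of the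
half-space `{v | ⟪v, n⟫ ≤ c}` nearest to `w`. Hence `E w` is the largest of the affine functions
`w ↦ ⟪w, v⟫ - ½‖v‖²` over `v` in the half-space, and a pointwise supremum of affine functions,
attained at every point, is convex.
-/

open scoped RealInnerProductSpace

open Set

variable {F : Type*} [NormedAddCommGroup F] [InnerProductSpace ℝ F]

lemma inner_sub_half_norm_sq_eq (w v : F) :
    ⟪w, v⟫ - (1 / 2) * ‖v‖ ^ 2 = (1 / 2) * ‖w‖ ^ 2 - (1 / 2) * ‖w - v‖ ^ 2 := by
  rw [norm_sub_sq_real]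
  ring

theorem convexOn_inner_sub_half_norm_sq_of_nearest {P : F → F}
    (hP : ∀ w v, ‖w - P w‖ ≤ ‖w - P v‖) :
    ConvexOn ℝ univ fun w => ⟪w, P w⟫ - (1 / 2) * ‖P w‖ ^ 2 := by
  refine ⟨convex_univ, fun w₀ _ w₁ _ a b ha hb hab => ?_⟩
  set p := P (a • w₀ + b • w₁)
  have supporting (w : F) : ⟪w, p⟫ - (1 / 2) * ‖p‖ ^ 2 ≤ ⟪w, P w⟫ - (1 / 2) * ‖P w‖ ^ 2 := by
    rw [inner_sub_half_norm_sq_eq, inner_sub_half_norm_sq_eq]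
    gcongr
    exact hP w _
  calc ⟪a • w₀ + b • w₁, p⟫ - (1 / 2) * ‖p‖ ^ 2
      = a * (⟪w₀, p⟫ - (1 / 2) * ‖p‖ ^ 2) + b * (⟪w₁, p⟫ - (1 / 2) * ‖p‖ ^ 2) := by
        rw [inner_add_left, real_inner_smul_left, real_inner_smul_left]
        linear_combination (1 / 2) * ‖p‖ ^ 2 * hab
    _ ≤ a • (⟪w₀, P w₀⟫ - (1 / 2) * ‖P w₀‖ ^ 2) + b • (⟪w₁, P w₁⟫ - (1 / 2) * ‖P w₁‖ ^ 2) := by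
        simp only [smul_eq_mul]
        exact add_le_add (mul_le_mul_of_nonneg_left (supporting w₀) ha)
          (mul_le_mul_of_nonneg_left (supporting w₁) hb)

noncomputable def halfspaceProj (n : F) (c : ℝ) (v : F) : F :=
  if ⟪v, n⟫ ≤ c then v else v - ⟪v, n⟫ • n + c • n

section halfspaceProj

variable {n : F} (hn : ‖n‖ = 1) {c : ℝ}
include hn

lemma inner_halfspaceProj_le (v : F) : ⟪halfspaceProj n c v, n⟫ ≤ c := by
  unfold halfspaceProj
  split_ifs with hv
  · exact hv
  · rw [inner_add_left, inner_sub_left, real_inner_smul_left, real_inner_smul_left,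
      real_inner_self_eq_norm_sq, hn]
    simp

lemma norm_sub_halfspaceProj_le {v : F} (hv : ⟪v, n⟫ ≤ c) (w : F) :
    ‖w - halfspaceProj n c w‖ ≤ ‖w - v‖ := by
  unfold halfspaceProj
  split_ifs with hw
  · simp
  · have hgap : w - (w - ⟪w, n⟫ • n + c • n) = (⟪w, n⟫ - c) • n := by module
    rw [hgap, norm_smul, hn, mul_one, Real.norm_of_nonneg (by linarith)]
    calc ⟪w, n⟫ - c ≤ ⟪w - v, n⟫ := by rw [inner_sub_left]; linarith
      _ ≤ ‖w - v‖ := by simpa [hn] using real_inner_le_norm (w - v) n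

end halfspaceProj

theorem E_convex_of_nonneg_speed_general {d : ℕ} (c : ℝ)
    (n : EuclideanSpace ℝ (Fin d)) (hn : ‖n‖ = 1)
    (P : EuclideanSpace ℝ (Fin d) → EuclideanSpace ℝ (Fin d))
    (hP : ∀ v, P v = if ⟪v, n⟫ ≤ c then v else v - ⟪v, n⟫ • n + c • n)
    (En : EuclideanSpace ℝ (Fin d) → ℝ)
    (hEn : ∀ w, En w = ⟪w, P w⟫ - (1 / 2) * ‖P w‖ ^ 2) :
    ∀ w₀ w₁ : EuclideanSpace ℝ (Fin d), ∀ s ∈ Set.Icc (0 : ℝ) 1,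
      En ((1 - s) • w₀ + s • w₁) ≤ (1 - s) * En w₀ + s * En w₁ := by
  rintro w₀ w₁ s ⟨hs₀, hs₁⟩
  obtain rfl : P = halfspaceProj n c := funext hP
  obtain rfl : En = fun w => ⟪w, halfspaceProj n c w⟫ - (1 / 2) * ‖halfspaceProj n c w‖ ^ 2 :=
    funext hEn
  have hconvex := convexOn_inner_sub_half_norm_sq_of_nearest (P := halfspaceProj n c) fun w v =>
    norm_sub_halfspaceProj_le hn (inner_halfspaceProj_le hn v) w
  exact hconvex.2 (mem_univ w₀) (mem_univ w₁) (by linarith) hs₀ (by ring)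

theorem E_convex_of_nonneg_speed {d : ℕ} (c : ℝ) (hc : 0 ≤ c)
    (n : EuclideanSpace ℝ (Fin d)) (hn : ‖n‖ = 1)
    (P : EuclideanSpace ℝ (Fin d) → EuclideanSpace ℝ (Fin d))
    (hP : ∀ v, P v = if ⟪v, n⟫ ≤ c then v else v - ⟪v, n⟫ • n + c • n)
    (En : EuclideanSpace ℝ (Fin d) → ℝ)
    (hEn : ∀ w, En w = ⟪w, P w⟫ - (1 / 2) * ‖P w‖ ^ 2) :
    ∀ w₀ w₁ : EuclideanSpace ℝ (Fin d), ∀ s ∈ Set.Icc (0 : ℝ) 1,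
      En ((1 - s) • w₀ + s • w₁) ≤ (1 - s) * En w₀ + s * En w₁ :=
  E_convex_of_nonneg_speed_general c n hn P hP En hEn
end

section
/- Let W : ℝ^d → ℝ be C¹, even (W(x) = W(−x)), and λ-convex. Let μ¹, μ² be probability measures with finite second moments, γ an optimal transport plan between them. Then −∫∫⟨∇W(x−x') − ∇W(y−y'), (x−x') − (y−y')⟩ dγ(x',y') dγ(x,y) ≤ −λ ∫∫ |x−x'−y+y'|² dγ(x',y') dγ(x,y) ≤ max(0, −4λ) d_W²(μ¹, μ²). -/
/-! λ-convexity makes `∇W` λ-monotone, which bounds the integrand pointwise from below by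
`λ |(x - x') - (y - y')|²`. Since `(x - x') - (y - y') = (x - y) - (x' - y')` and
`|a - b|² ≤ 2|a|² + 2|b|²`, the double integral of this square is at most four times the transport
cost of `γ`; finally `-λ I ≤ max 0 (-λ) · I` for `I ≥ 0`. -/

open MeasureTheory
open scoped RealInnerProductSpace

lemma norm_sub_sq_le_two_mul {E : Type*} [SeminormedAddCommGroup E] (a b : E) :
    ‖a - b‖ ^ 2 ≤ 2 * (‖a‖ ^ 2 + ‖b‖ ^ 2) :=
  calc ‖a - b‖ ^ 2 ≤ (‖a‖ + ‖b‖) ^ 2 := pow_le_pow_left₀ (norm_nonneg _) (norm_sub_le a b) 2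
    _ ≤ 2 * (‖a‖ ^ 2 + ‖b‖ ^ 2) := add_sq_le

lemma integral_norm_sub_sq_prod_le {α E : Type*} [MeasurableSpace α] [SeminormedAddCommGroup E]
    {μ : Measure α} [IsProbabilityMeasure μ] {f : α → E}
    (hf : Integrable (fun a => ‖f a‖ ^ 2) μ) :
    ∫ q, ‖f q.1 - f q.2‖ ^ 2 ∂(μ.prod μ) ≤ 4 * ∫ a, ‖f a‖ ^ 2 ∂μ := by
  have hfst : Integrable (fun q : α × α => ‖f q.1‖ ^ 2) (μ.prod μ) := hf.comp_fst μ
  have hsnd : Integrable (fun q : α × α => ‖f q.2‖ ^ 2) (μ.prod μ) := hf.comp_snd μ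
  calc ∫ q, ‖f q.1 - f q.2‖ ^ 2 ∂(μ.prod μ)
      ≤ ∫ q, 2 * (‖f q.1‖ ^ 2 + ‖f q.2‖ ^ 2) ∂(μ.prod μ) :=
        integral_mono_of_nonneg (.of_forall fun _ => by positivity)
          ((hfst.add hsnd).const_mul 2) (.of_forall fun q => norm_sub_sq_le_two_mul _ _)
    _ = 4 * ∫ a, ‖f a‖ ^ 2 ∂μ := by
        rw [integral_const_mul, integral_add hfst hsnd, integral_fun_fst (fun a => ‖f a‖ ^ 2),
          integral_fun_snd (fun a => ‖f a‖ ^ 2)]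
        simp only [probReal_univ, one_smul]
        ring

lemma mul_integral_norm_sub_sq_le_integral_inner {Ω E : Type*} [MeasurableSpace Ω]
    [NormedAddCommGroup E] [InnerProductSpace ℝ E] {μ : Measure Ω} {lam : ℝ} {W' : E → E}
    (hconv : ∀ x y, lam * ‖x - y‖ ^ 2 ≤ ⟪W' x - W' y, x - y⟫) {f g : Ω → E}
    (hsq : Integrable (fun ω => ‖f ω - g ω‖ ^ 2) μ)
    (hinner : Integrable (fun ω => ⟪W' (f ω) - W' (g ω), f ω - g ω⟫) μ) :
    lam * ∫ ω, ‖f ω - g ω‖ ^ 2 ∂μ ≤ ∫ ω, ⟪W' (f ω) - W' (g ω), f ω - g ω⟫ ∂μ := by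
  rw [← integral_const_mul]
  exact integral_mono (hsq.const_mul lam) hinner fun ω => hconv (f ω) (g ω)

theorem lambda_convex_interaction_stability_general {d : ℕ} (lam : ℝ)
    (W' : EuclideanSpace ℝ (Fin d) → EuclideanSpace ℝ (Fin d))
    (hconv : ∀ x y, lam * ‖x - y‖ ^ 2 ≤ ⟪W' x - W' y, x - y⟫)
    (μ₁ : Measure (EuclideanSpace ℝ (Fin d)))
    [IsProbabilityMeasure μ₁]
    (γ : Measure (EuclideanSpace ℝ (Fin d) × EuclideanSpace ℝ (Fin d)))
    (hγ₁ : γ.map Prod.fst = μ₁)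
    (hcost : Integrable (fun p => ‖p.1 - p.2‖ ^ 2) γ)
    (hint₁ : Integrable
      (fun q => ⟪W' (q.1.1 - q.2.1) - W' (q.1.2 - q.2.2),
        (q.1.1 - q.2.1) - (q.1.2 - q.2.2)⟫) (γ.prod γ))
    (hint₂ : Integrable
      (fun q => ‖(q.1.1 - q.2.1) - (q.1.2 - q.2.2)‖ ^ 2) (γ.prod γ)) :
    -(∫ q, ⟪W' (q.1.1 - q.2.1) - W' (q.1.2 - q.2.2),
        (q.1.1 - q.2.1) - (q.1.2 - q.2.2)⟫ ∂(γ.prod γ))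
      ≤ -lam * ∫ q, ‖(q.1.1 - q.2.1) - (q.1.2 - q.2.2)‖ ^ 2 ∂(γ.prod γ) ∧
    -lam * (∫ q, ‖(q.1.1 - q.2.1) - (q.1.2 - q.2.2)‖ ^ 2 ∂(γ.prod γ))
      ≤ max 0 (-(4 * lam)) * ∫ p, ‖p.1 - p.2‖ ^ 2 ∂γ := by
  have hγ₁_prob : IsProbabilityMeasure (γ.map Prod.fst) := hγ₁ ▸ inferInstance
  have hγ_prob := Measure.isProbabilityMeasure_of_map (μ := γ) Prod.fst
  set I := ∫ q, ‖(q.1.1 - q.2.1) - (q.1.2 - q.2.2)‖ ^ 2 ∂(γ.prod γ)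
  have hI_le : I ≤ 4 * ∫ p, ‖p.1 - p.2‖ ^ 2 ∂γ := by
    have hrearrange : I = ∫ q, ‖(q.1.1 - q.1.2) - (q.2.1 - q.2.2)‖ ^ 2 ∂(γ.prod γ) :=
      integral_congr_ae (.of_forall fun q => by simp only [sub_sub_sub_comm q.1.1])
    rw [hrearrange]
    exact integral_norm_sub_sq_prod_le (μ := γ)
      (f := fun p : EuclideanSpace ℝ (Fin d) × EuclideanSpace ℝ (Fin d) => p.1 - p.2) hcost
  refine ⟨?_, ?_⟩
  · rw [neg_mul]
    exact neg_le_neg (mul_integral_norm_sub_sq_le_integral_inner hconv hint₂ hint₁)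
  · calc -lam * I ≤ max 0 (-lam) * I :=
          mul_le_mul_of_nonneg_right (le_max_right _ _) (integral_nonneg fun _ => by positivity)
      _ ≤ max 0 (-lam) * (4 * ∫ p, ‖p.1 - p.2‖ ^ 2 ∂γ) :=
          mul_le_mul_of_nonneg_left hI_le (le_max_left _ _)
      _ = max 0 (-(4 * lam)) * ∫ p, ‖p.1 - p.2‖ ^ 2 ∂γ := by
          rw [← mul_assoc, max_mul_of_nonneg _ _ (by norm_num : (0 : ℝ) ≤ 4)]
          ring_nf

theorem lambda_convex_interaction_stability {d : ℕ} (lam : ℝ)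
    (W : EuclideanSpace ℝ (Fin d) → ℝ)
    (W' : EuclideanSpace ℝ (Fin d) → EuclideanSpace ℝ (Fin d))
    (hW : ∀ x, HasGradientAt W (W' x) x)
    (heven : ∀ x, W x = W (-x))
    (hconv : ∀ x y, lam * ‖x - y‖ ^ 2 ≤ ⟪W' x - W' y, x - y⟫)
    (μ₁ μ₂ : Measure (EuclideanSpace ℝ (Fin d)))
    [IsProbabilityMeasure μ₁] [IsProbabilityMeasure μ₂]
    (hμ₁ : Integrable (fun x => ‖x‖ ^ 2) μ₁)
    (hμ₂ : Integrable (fun x => ‖x‖ ^ 2) μ₂)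
    (γ : Measure (EuclideanSpace ℝ (Fin d) × EuclideanSpace ℝ (Fin d)))
    [SFinite γ]
    (hγ₁ : γ.map Prod.fst = μ₁) (hγ₂ : γ.map Prod.snd = μ₂)
    (hopt : ∀ γ' : Measure (EuclideanSpace ℝ (Fin d) × EuclideanSpace ℝ (Fin d)),
      γ'.map Prod.fst = μ₁ → γ'.map Prod.snd = μ₂ →
      (∫ p, ‖p.1 - p.2‖ ^ 2 ∂γ) ≤ ∫ p, ‖p.1 - p.2‖ ^ 2 ∂γ')
    (hcost : Integrable (fun p => ‖p.1 - p.2‖ ^ 2) γ)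
    (hint₁ : Integrable
      (fun q => ⟪W' (q.1.1 - q.2.1) - W' (q.1.2 - q.2.2),
        (q.1.1 - q.2.1) - (q.1.2 - q.2.2)⟫) (γ.prod γ))
    (hint₂ : Integrable
      (fun q => ‖(q.1.1 - q.2.1) - (q.1.2 - q.2.2)‖ ^ 2) (γ.prod γ)) :
    -(∫ q, ⟪W' (q.1.1 - q.2.1) - W' (q.1.2 - q.2.2),
        (q.1.1 - q.2.1) - (q.1.2 - q.2.2)⟫ ∂(γ.prod γ))
      ≤ -lam * ∫ q, ‖(q.1.1 - q.2.1) - (q.1.2 - q.2.2)‖ ^ 2 ∂(γ.prod γ) ∧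
    -lam * (∫ q, ‖(q.1.1 - q.2.1) - (q.1.2 - q.2.2)‖ ^ 2 ∂(γ.prod γ))
      ≤ max 0 (-(4 * lam)) * ∫ p, ‖p.1 - p.2‖ ^ 2 ∂γ :=
  lambda_convex_interaction_stability_general lam W' hconv μ₁ γ hγ₁ hcost hint₁ hint₂
end

section
/- Let V, W ∈ C¹(ℝ^d) with |∇V(x)| ≤ C(1+|x|), |∇W(x)| ≤ C(1+|x|), and W even. Define for probability measures μ with finite second moment the energy φ(μ) = ∫V dμ + (1/2)∫∫W(x−y) dμ(y)dμ(x). Then for any μ¹, μ² with finite second moments, |φ(μ¹) − φ(μ²)| ≤ C'(1 + m₂(μ¹) + m₂(μ²)) d_W(μ¹, μ²), where m₂ denotes the second moment and d_W the 2-Wasserstein distance, with C' depending only on C. -/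
/-!
By the mean value theorem, a function whose gradient grows at most linearly satisfies
`|f x - f y| ≤ C (1 + ‖x‖ + ‖y‖) ‖x - y‖`. Integrating this against a coupling `γ` of `μ₁` and
`μ₂` and applying Cauchy–Schwarz bounds `|∫ f dμ₁ - ∫ f dμ₂|` by the `L²(γ)` norm of
`1 + ‖x‖ + ‖y‖`, which is controlled by the second moments, times the square root of the
transport cost of `γ`. The interaction energy is the potential energy of `p ↦ W (p.1 - p.2)`
on `E × E`, and regrouping the coordinates of `γ ⊗ γ` gives a coupling of `μ₁ ⊗ μ₁` with
`μ₂ ⊗ μ₂` whose cost is at most twice that of `γ`.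
-/

open MeasureTheory

variable {E : Type*}

def LipschitzWithLinearGrowth [SeminormedAddCommGroup E] (L : ℝ) (f : E → ℝ) : Prop :=
  ∀ x y, |f x - f y| ≤ L * (1 + ‖x‖ + ‖y‖) * ‖x - y‖

namespace LipschitzWithLinearGrowth

theorem of_hasGradientAt [NormedAddCommGroup E] [InnerProductSpace ℝ E] [CompleteSpace E]
    {f : E → ℝ} {f' : E → E} {C : ℝ} (hf : ∀ x, HasGradientAt f (f' x) x)
    (hf' : ∀ x, ‖f' x‖ ≤ C * (1 + ‖x‖)) : LipschitzWithLinearGrowth C f := by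
  intro x y
  have hC : 0 ≤ C := by nlinarith [hf' 0, norm_nonneg (f' 0), norm_zero (E := E)]
  have hderiv_le : ∀ z ∈ segment ℝ y x,
      ‖InnerProductSpace.toDual ℝ E (f' z)‖ ≤ C * (1 + ‖x‖ + ‖y‖) := by
    intro z hz
    have hz : ‖z‖ ≤ max ‖x‖ ‖y‖ := by
      simpa using (convex_closedBall (0 : E) (max ‖x‖ ‖y‖)).segment_subset
        (by simp) (by simp) hz
    rw [LinearIsometryEquiv.norm_map]
    calc ‖f' z‖ ≤ C * (1 + ‖z‖) := hf' z
      _ ≤ C * (1 + ‖x‖ + ‖y‖) := by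
        gcongr C * ?_
        linarith [max_le_add_of_nonneg (norm_nonneg x) (norm_nonneg y)]
  rw [← Real.norm_eq_abs]
  exact (convex_segment y x).norm_image_sub_le_of_norm_hasFDerivWithin_le
    (fun z _ => (hf z).hasFDerivAt.hasFDerivWithinAt) hderiv_le
    (left_mem_segment ℝ y x) (right_mem_segment ℝ y x)

theorem comp_sub [SeminormedAddCommGroup E] {g : E → ℝ} {L : ℝ} (hL : 0 ≤ L)
    (hg : LipschitzWithLinearGrowth L g) :
    LipschitzWithLinearGrowth (4 * L) (fun p : E × E => g (p.1 - p.2)) := by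
  intro p q
  have hp : ‖p.1 - p.2‖ ≤ 2 * ‖p‖ := by
    linarith [norm_sub_le p.1 p.2, norm_fst_le p, norm_snd_le p]
  have hq : ‖q.1 - q.2‖ ≤ 2 * ‖q‖ := by
    linarith [norm_sub_le q.1 q.2, norm_fst_le q, norm_snd_le q]
  have hpq : ‖(p.1 - p.2) - (q.1 - q.2)‖ ≤ 2 * ‖p - q‖ := by
    rw [sub_sub_sub_comm]
    have h₁ : ‖p.1 - q.1‖ ≤ ‖p - q‖ := norm_fst_le (p - q)
    have h₂ : ‖p.2 - q.2‖ ≤ ‖p - q‖ := norm_snd_le (p - q)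
    linarith [norm_sub_le (p.1 - q.1) (p.2 - q.2)]
  calc |g (p.1 - p.2) - g (q.1 - q.2)|
      ≤ L * (1 + ‖p.1 - p.2‖ + ‖q.1 - q.2‖) * ‖(p.1 - p.2) - (q.1 - q.2)‖ := hg _ _
    _ ≤ L * (2 * (1 + ‖p‖ + ‖q‖)) * (2 * ‖p - q‖) := by gcongr; linarith
    _ = 4 * L * (1 + ‖p‖ + ‖q‖) * ‖p - q‖ := by ring

end LipschitzWithLinearGrowth

theorem integral_mul_le_sqrt_mul_sqrt {α : Type*} [MeasurableSpace α] {μ : Measure α}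
    {f g : α → ℝ} (hf₀ : 0 ≤ f) (hg₀ : 0 ≤ g) (hf : MemLp f 2 μ) (hg : MemLp g 2 μ) :
    ∫ x, f x * g x ∂μ ≤ √(∫ x, f x ^ 2 ∂μ) * √(∫ x, g x ^ 2 ∂μ) := by
  have h2 : ENNReal.ofReal 2 = 2 := by norm_num
  have h := integral_mul_le_Lp_mul_Lq_of_nonneg Real.HolderConjugate.two_two
    (.of_forall hf₀) (.of_forall hg₀) (h2 ▸ hf) (h2 ▸ hg)
  simp only [Real.rpow_two, one_div] at h
  rwa [Real.sqrt_eq_rpow, Real.sqrt_eq_rpow, one_div]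

theorem integral_sq_one_add_norm_add_norm_le {Ω : Type*} [MeasurableSpace Ω] {ρ : Measure Ω}
    [IsProbabilityMeasure ρ] [NormedAddCommGroup E] {X Y : Ω → E}
    (hX : MemLp X 2 ρ) (hY : MemLp Y 2 ρ) :
    ∫ ω, (1 + ‖X ω‖ + ‖Y ω‖) ^ 2 ∂ρ ≤ 3 * (1 + ∫ ω, ‖X ω‖ ^ 2 ∂ρ + ∫ ω, ‖Y ω‖ ^ 2 ∂ρ) := by
  have hX₂ := (memLp_two_iff_integrable_sq_norm hX.1).1 hX
  have hY₂ := (memLp_two_iff_integrable_sq_norm hY.1).1 hY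
  have h1X₂ : Integrable (fun ω => 1 + ‖X ω‖ ^ 2) ρ := (integrable_const (1 : ℝ)).add hX₂
  have hweight : MemLp (fun ω => 1 + ‖X ω‖ + ‖Y ω‖) 2 ρ :=
    ((memLp_const (1 : ℝ)).add hX.norm).add hY.norm
  calc ∫ ω, (1 + ‖X ω‖ + ‖Y ω‖) ^ 2 ∂ρ
      ≤ ∫ ω, 3 * (1 + ‖X ω‖ ^ 2 + ‖Y ω‖ ^ 2) ∂ρ := by
        refine integral_mono hweight.integrable_sq ((h1X₂.add hY₂).const_mul 3) fun ω => ?_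
        nlinarith [sq_nonneg (‖X ω‖ - ‖Y ω‖), sq_nonneg (1 - ‖X ω‖), sq_nonneg (1 - ‖Y ω‖)]
    _ = 3 * (1 + ∫ ω, ‖X ω‖ ^ 2 ∂ρ + ∫ ω, ‖Y ω‖ ^ 2 ∂ρ) := by
        rw [integral_const_mul, integral_add h1X₂ hY₂,
          integral_add (integrable_const 1) hX₂, integral_const, probReal_univ, one_smul]

theorem sqrt_integral_sq_one_add_norm_add_norm_le {Ω : Type*} [MeasurableSpace Ω]
    {ρ : Measure Ω} [IsProbabilityMeasure ρ] [NormedAddCommGroup E] {X Y : Ω → E}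
    (hX : MemLp X 2 ρ) (hY : MemLp Y 2 ρ) :
    √(∫ ω, (1 + ‖X ω‖ + ‖Y ω‖) ^ 2 ∂ρ) ≤ 2 * (1 + ∫ ω, ‖X ω‖ ^ 2 ∂ρ + ∫ ω, ‖Y ω‖ ^ 2 ∂ρ) := by
  have hS : 1 ≤ 1 + ∫ ω, ‖X ω‖ ^ 2 ∂ρ + ∫ ω, ‖Y ω‖ ^ 2 ∂ρ := by
    have hX₀ : 0 ≤ ∫ ω, ‖X ω‖ ^ 2 ∂ρ := integral_nonneg fun ω => by positivity
    have hY₀ : 0 ≤ ∫ ω, ‖Y ω‖ ^ 2 ∂ρ := integral_nonneg fun ω => by positivity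
    linarith
  rw [Real.sqrt_le_left (by positivity)]
  nlinarith [integral_sq_one_add_norm_add_norm_le hX hY]

section ProductMeasure

variable {α β α' β' F : Type*} [MeasurableSpace α] [MeasurableSpace β] [MeasurableSpace α']
  [MeasurableSpace β']

theorem measurable_prodProdProdComm :
    Measurable (Equiv.prodProdProdComm α β α' β') :=
  (measurable_fst.fst.prodMk measurable_snd.fst).prodMk
    (measurable_fst.snd.prodMk measurable_snd.snd)

theorem map_fst_map_prodProdProdComm (γ : Measure (α × β)) (γ' : Measure (α' × β'))
    [SFinite γ] [SFinite γ'] :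
    ((γ.prod γ').map (Equiv.prodProdProdComm α β α' β')).map Prod.fst
      = (γ.map Prod.fst).prod (γ'.map Prod.fst) := by
  rw [Measure.map_map measurable_fst measurable_prodProdProdComm,
    Measure.map_prod_map _ _ measurable_fst measurable_fst]
  rfl

theorem map_snd_map_prodProdProdComm (γ : Measure (α × β)) (γ' : Measure (α' × β'))
    [SFinite γ] [SFinite γ'] :
    ((γ.prod γ').map (Equiv.prodProdProdComm α β α' β')).map Prod.snd
      = (γ.map Prod.snd).prod (γ'.map Prod.snd) := by
  rw [Measure.map_map measurable_snd measurable_prodProdProdComm,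
    Measure.map_prod_map _ _ measurable_snd measurable_snd]
  rfl

theorem norm_prodMk_sq_le [SeminormedAddCommGroup E] [SeminormedAddCommGroup F]
    (x : E) (y : F) :
    ‖(x, y)‖ ^ 2 ≤ ‖x‖ ^ 2 + ‖y‖ ^ 2 := by
  rcases max_choice ‖x‖ ‖y‖ with h | h <;> rw [Prod.norm_mk, h] <;>
    nlinarith [sq_nonneg ‖x‖, sq_nonneg ‖y‖]

variable [NormedAddCommGroup E] [NormedAddCommGroup F] {μ : Measure α} {ν : Measure β}
  {f : α → E} {g : β → F}

theorem integrable_norm_prodMk_sq [IsFiniteMeasure μ] [IsFiniteMeasure ν] (hf : MemLp f 2 μ)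
    (hg : MemLp g 2 ν) :
    Integrable (fun z : α × β => ‖(f z.1, g z.2)‖ ^ 2) (μ.prod ν) := by
  have hf₂ := ((memLp_two_iff_integrable_sq_norm hf.1).1 hf).comp_fst ν
  have hg₂ := ((memLp_two_iff_integrable_sq_norm hg.1).1 hg).comp_snd μ
  refine (hf₂.add hg₂).mono' ((hf.1.comp_fst.prodMk hg.1.comp_snd).norm.pow 2)
    (.of_forall fun z => ?_)
  rw [Real.norm_of_nonneg (by positivity)]
  exact norm_prodMk_sq_le _ _

theorem integral_norm_prodMk_sq_le [IsProbabilityMeasure μ] [IsProbabilityMeasure ν]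
    (hf : MemLp f 2 μ) (hg : MemLp g 2 ν) :
    ∫ z : α × β, ‖(f z.1, g z.2)‖ ^ 2 ∂(μ.prod ν) ≤ ∫ x, ‖f x‖ ^ 2 ∂μ + ∫ y, ‖g y‖ ^ 2 ∂ν := by
  have hf₂ := ((memLp_two_iff_integrable_sq_norm hf.1).1 hf).comp_fst ν
  have hg₂ := ((memLp_two_iff_integrable_sq_norm hg.1).1 hg).comp_snd μ
  calc ∫ z : α × β, ‖(f z.1, g z.2)‖ ^ 2 ∂(μ.prod ν)
      ≤ ∫ z : α × β, (‖f z.1‖ ^ 2 + ‖g z.2‖ ^ 2) ∂(μ.prod ν) :=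
        integral_mono (integrable_norm_prodMk_sq hf hg) (hf₂.add hg₂) fun z =>
          norm_prodMk_sq_le _ _
    _ = ∫ x, ‖f x‖ ^ 2 ∂μ + ∫ y, ‖g y‖ ^ 2 ∂ν := by
        rw [integral_add hf₂ hg₂, integral_fun_fst (fun x => ‖f x‖ ^ 2),
          integral_fun_snd (fun y => ‖g y‖ ^ 2)]
        simp

end ProductMeasure

section Coupling

variable {F : Type*} [NormedAddCommGroup E] [MeasurableSpace E] [OpensMeasurableSpace E]
  [SecondCountableTopology E] [NormedAddCommGroup F] [MeasurableSpace F] [OpensMeasurableSpace F]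
  [SecondCountableTopology F]

theorem memLp_two_fst_of_map_fst {γ : Measure (E × E)} {μ : Measure E}
    (hγ : γ.map Prod.fst = μ) (hμ : Integrable (fun x => ‖x‖ ^ 2) μ) :
    MemLp Prod.fst 2 γ := by
  subst hγ
  exact (memLp_two_iff_integrable_sq_norm measurable_fst.aestronglyMeasurable).2
    (hμ.comp_measurable measurable_fst)

theorem memLp_two_snd_of_map_snd {γ : Measure (E × E)} {μ : Measure E}
    (hγ : γ.map Prod.snd = μ) (hμ : Integrable (fun x => ‖x‖ ^ 2) μ) :
    MemLp Prod.snd 2 γ := by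
  subst hγ
  exact (memLp_two_iff_integrable_sq_norm measurable_snd.aestronglyMeasurable).2
    (hμ.comp_measurable measurable_snd)

theorem integrable_norm_sq_prod {μ : Measure E} {ν : Measure F} [IsFiniteMeasure μ]
    [IsFiniteMeasure ν] (hμ : Integrable (fun x => ‖x‖ ^ 2) μ)
    (hν : Integrable (fun y => ‖y‖ ^ 2) ν) :
    Integrable (fun p => ‖p‖ ^ 2) (μ.prod ν) :=
  integrable_norm_prodMk_sq (f := id) (g := id)
    ((memLp_two_iff_integrable_sq_norm aestronglyMeasurable_id).2 hμ)
    ((memLp_two_iff_integrable_sq_norm aestronglyMeasurable_id).2 hν)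

theorem integral_norm_sq_prod_le {μ : Measure E} {ν : Measure F} [IsProbabilityMeasure μ]
    [IsProbabilityMeasure ν] (hμ : Integrable (fun x => ‖x‖ ^ 2) μ)
    (hν : Integrable (fun y => ‖y‖ ^ 2) ν) :
    ∫ p, ‖p‖ ^ 2 ∂(μ.prod ν) ≤ ∫ x, ‖x‖ ^ 2 ∂μ + ∫ y, ‖y‖ ^ 2 ∂ν :=
  integral_norm_prodMk_sq_le (f := id) (g := id)
    ((memLp_two_iff_integrable_sq_norm aestronglyMeasurable_id).2 hμ)
    ((memLp_two_iff_integrable_sq_norm aestronglyMeasurable_id).2 hν)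

theorem integral_norm_sub_sq_map_prodProdProdComm_le {γ : Measure (E × E)}
    {γ' : Measure (F × F)} [IsProbabilityMeasure γ] [IsProbabilityMeasure γ']
    (hγ : Integrable (fun p => ‖p.1 - p.2‖ ^ 2) γ)
    (hγ' : Integrable (fun p => ‖p.1 - p.2‖ ^ 2) γ') :
    ∫ q, ‖q.1 - q.2‖ ^ 2 ∂((γ.prod γ').map (Equiv.prodProdProdComm E E F F))
      ≤ ∫ p, ‖p.1 - p.2‖ ^ 2 ∂γ + ∫ p, ‖p.1 - p.2‖ ^ 2 ∂γ' := by
  have hcont : Continuous fun q : (E × F) × (E × F) => ‖q.1 - q.2‖ ^ 2 := by fun_prop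
  have hD : MemLp (fun p : E × E => p.1 - p.2) 2 γ :=
    (memLp_two_iff_integrable_sq_norm (by fun_prop : Continuous _).aestronglyMeasurable).2 hγ
  have hD' : MemLp (fun p : F × F => p.1 - p.2) 2 γ' :=
    (memLp_two_iff_integrable_sq_norm (by fun_prop : Continuous _).aestronglyMeasurable).2 hγ'
  rw [integral_map measurable_prodProdProdComm.aemeasurable hcont.aestronglyMeasurable]
  exact integral_norm_prodMk_sq_le hD hD'

theorem abs_integral_sub_integral_le_of_coupling {γ : Measure (E × E)} [IsProbabilityMeasure γ]
    {μ₁ μ₂ : Measure E} (hγ₁ : γ.map Prod.fst = μ₁) (hγ₂ : γ.map Prod.snd = μ₂)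
    (hm₁ : Integrable (fun x => ‖x‖ ^ 2) μ₁) (hm₂ : Integrable (fun x => ‖x‖ ^ 2) μ₂)
    {f : E → ℝ} {L : ℝ} (hL : 0 ≤ L) (hf : LipschitzWithLinearGrowth L f)
    (hf₁ : Integrable f μ₁) (hf₂ : Integrable f μ₂) :
    |∫ x, f x ∂μ₁ - ∫ x, f x ∂μ₂|
      ≤ 2 * L * (1 + ∫ x, ‖x‖ ^ 2 ∂μ₁ + ∫ x, ‖x‖ ^ 2 ∂μ₂) * √(∫ p, ‖p.1 - p.2‖ ^ 2 ∂γ) := by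
  have hX := memLp_two_fst_of_map_fst hγ₁ hm₁
  have hY := memLp_two_snd_of_map_snd hγ₂ hm₂
  subst hγ₁ hγ₂
  have hweight : MemLp (fun p : E × E => 1 + ‖p.1‖ + ‖p.2‖) 2 γ :=
    ((memLp_const (1 : ℝ)).add hX.norm).add hY.norm
  have hdist : MemLp (fun p : E × E => ‖p.1 - p.2‖) 2 γ := (hX.sub hY).norm
  have hf₁' : Integrable (fun p : E × E => f p.1) γ := hf₁.comp_measurable measurable_fst
  have hf₂' : Integrable (fun p : E × E => f p.2) γ := hf₂.comp_measurable measurable_snd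
  calc |∫ x, f x ∂(γ.map Prod.fst) - ∫ x, f x ∂(γ.map Prod.snd)|
      = |∫ p, (f p.1 - f p.2) ∂γ| := by
        rw [integral_map measurable_fst.aemeasurable hf₁.1,
          integral_map measurable_snd.aemeasurable hf₂.1,
          integral_sub hf₁' hf₂']
    _ ≤ ∫ p, |f p.1 - f p.2| ∂γ := abs_integral_le_integral_abs
    _ ≤ ∫ p, L * ((1 + ‖p.1‖ + ‖p.2‖) * ‖p.1 - p.2‖) ∂γ := by
        refine integral_mono (hf₁'.sub hf₂').abs ((hweight.integrable_mul hdist).const_mul L)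
          fun p => ?_
        simpa only [mul_assoc] using hf p.1 p.2
    _ = L * ∫ p, (1 + ‖p.1‖ + ‖p.2‖) * ‖p.1 - p.2‖ ∂γ := integral_const_mul _ _
    _ ≤ L * (√(∫ p, (1 + ‖p.1‖ + ‖p.2‖) ^ 2 ∂γ) * √(∫ p, ‖p.1 - p.2‖ ^ 2 ∂γ)) := by
        gcongr
        exact integral_mul_le_sqrt_mul_sqrt (fun p => by positivity) (fun p => by positivity)
          hweight hdist
    _ ≤ L * (2 * (1 + ∫ p, ‖p.1‖ ^ 2 ∂γ + ∫ p, ‖p.2‖ ^ 2 ∂γ) * √(∫ p, ‖p.1 - p.2‖ ^ 2 ∂γ)) := by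
        gcongr
        exact sqrt_integral_sq_one_add_norm_add_norm_le hX hY
    _ = _ := by
        rw [integral_map measurable_fst.aemeasurable hm₁.1,
          integral_map measurable_snd.aemeasurable hm₂.1]
        ring

theorem abs_integral_interaction_sub_le_of_coupling {γ : Measure (E × E)}
    [IsProbabilityMeasure γ] {μ₁ μ₂ : Measure E} (hγ₁ : γ.map Prod.fst = μ₁)
    (hγ₂ : γ.map Prod.snd = μ₂) (hm₁ : Integrable (fun x => ‖x‖ ^ 2) μ₁)
    (hm₂ : Integrable (fun x => ‖x‖ ^ 2) μ₂) (hcost : Integrable (fun p => ‖p.1 - p.2‖ ^ 2) γ)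
    {g : E → ℝ} {L : ℝ} (hL : 0 ≤ L) (hg : LipschitzWithLinearGrowth L g)
    (hg₁ : Integrable (fun p => g (p.1 - p.2)) (μ₁.prod μ₁))
    (hg₂ : Integrable (fun p => g (p.1 - p.2)) (μ₂.prod μ₂)) :
    |∫ p, g (p.1 - p.2) ∂(μ₁.prod μ₁) - ∫ p, g (p.1 - p.2) ∂(μ₂.prod μ₂)|
      ≤ 32 * L * (1 + ∫ x, ‖x‖ ^ 2 ∂μ₁ + ∫ x, ‖x‖ ^ 2 ∂μ₂) * √(∫ p, ‖p.1 - p.2‖ ^ 2 ∂γ) := by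
  have : IsProbabilityMeasure μ₁ :=
    hγ₁ ▸ Measure.isProbabilityMeasure_map measurable_fst.aemeasurable
  have : IsProbabilityMeasure μ₂ :=
    hγ₂ ▸ Measure.isProbabilityMeasure_map measurable_snd.aemeasurable
  set ρ := (γ.prod γ).map (Equiv.prodProdProdComm E E E E)
  have : IsProbabilityMeasure ρ :=
    Measure.isProbabilityMeasure_map measurable_prodProdProdComm.aemeasurable
  have hS₁ : 0 ≤ ∫ x, ‖x‖ ^ 2 ∂μ₁ := integral_nonneg fun x => by positivity
  have hS₂ : 0 ≤ ∫ x, ‖x‖ ^ 2 ∂μ₂ := integral_nonneg fun x => by positivity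
  have hT : 0 ≤ ∫ p, ‖p.1 - p.2‖ ^ 2 ∂γ := integral_nonneg fun p => by positivity
  have hM₁ := integral_norm_sq_prod_le hm₁ hm₁
  have hM₂ := integral_norm_sq_prod_le hm₂ hm₂
  have hcost₂ := integral_norm_sub_sq_map_prodProdProdComm_le hcost hcost
  have hρ₁ : ρ.map Prod.fst = μ₁.prod μ₁ := by rw [map_fst_map_prodProdProdComm, hγ₁]
  have hρ₂ : ρ.map Prod.snd = μ₂.prod μ₂ := by rw [map_snd_map_prodProdProdComm, hγ₂]
  calc |∫ p, g (p.1 - p.2) ∂(μ₁.prod μ₁) - ∫ p, g (p.1 - p.2) ∂(μ₂.prod μ₂)|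
      ≤ 2 * (4 * L) * (1 + ∫ p, ‖p‖ ^ 2 ∂(μ₁.prod μ₁) + ∫ p, ‖p‖ ^ 2 ∂(μ₂.prod μ₂))
          * √(∫ q, ‖q.1 - q.2‖ ^ 2 ∂ρ) :=
        abs_integral_sub_integral_le_of_coupling hρ₁ hρ₂ (integrable_norm_sq_prod hm₁ hm₁)
          (integrable_norm_sq_prod hm₂ hm₂) (by positivity) (hg.comp_sub hL) hg₁ hg₂
    _ ≤ 2 * (4 * L) * (2 * (1 + ∫ x, ‖x‖ ^ 2 ∂μ₁ + ∫ x, ‖x‖ ^ 2 ∂μ₂))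
          * (2 * √(∫ p, ‖p.1 - p.2‖ ^ 2 ∂γ)) := by
        gcongr
        · linarith
        · rw [Real.sqrt_le_left (by positivity), mul_pow, Real.sq_sqrt hT]
          linarith
    _ = 32 * L * (1 + ∫ x, ‖x‖ ^ 2 ∂μ₁ + ∫ x, ‖x‖ ^ 2 ∂μ₂) * √(∫ p, ‖p.1 - p.2‖ ^ 2 ∂γ) := by
        ring

end Coupling

theorem energy_lipschitz_in_wasserstein {d : ℕ} (C : ℝ) (hC : 0 < C) :
    ∃ C' > 0,
      ∀ (V W : EuclideanSpace ℝ (Fin d) → ℝ)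
        (V' W' : EuclideanSpace ℝ (Fin d) → EuclideanSpace ℝ (Fin d)),
        (∀ x, HasGradientAt V (V' x) x) →
        (∀ x, HasGradientAt W (W' x) x) →
        (∀ x, ‖V' x‖ ≤ C * (1 + ‖x‖)) →
        (∀ x, ‖W' x‖ ≤ C * (1 + ‖x‖)) →
        (∀ x, W x = W (-x)) →
        ∀ (μ₁ μ₂ : Measure (EuclideanSpace ℝ (Fin d))),
          IsProbabilityMeasure μ₁ → IsProbabilityMeasure μ₂ →
          Integrable (fun x => ‖x‖ ^ 2) μ₁ → Integrable (fun x => ‖x‖ ^ 2) μ₂ →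
          Integrable V μ₁ → Integrable V μ₂ →
          Integrable (fun p => W (p.1 - p.2)) (μ₁.prod μ₁) →
          Integrable (fun p => W (p.1 - p.2)) (μ₂.prod μ₂) →
          ∀ γ : Measure (EuclideanSpace ℝ (Fin d) × EuclideanSpace ℝ (Fin d)),
            γ.map Prod.fst = μ₁ → γ.map Prod.snd = μ₂ →
            (∀ γ' : Measure (EuclideanSpace ℝ (Fin d) × EuclideanSpace ℝ (Fin d)),
              γ'.map Prod.fst = μ₁ → γ'.map Prod.snd = μ₂ →
              (∫ p, ‖p.1 - p.2‖ ^ 2 ∂γ) ≤ ∫ p, ‖p.1 - p.2‖ ^ 2 ∂γ') →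
            Integrable (fun p => ‖p.1 - p.2‖ ^ 2) γ →
            |((∫ x, V x ∂μ₁) + (1 / 2) * ∫ p, W (p.1 - p.2) ∂(μ₁.prod μ₁))
              - ((∫ x, V x ∂μ₂) + (1 / 2) * ∫ p, W (p.1 - p.2) ∂(μ₂.prod μ₂))|
              ≤ C' * (1 + (∫ x, ‖x‖ ^ 2 ∂μ₁) + ∫ x, ‖x‖ ^ 2 ∂μ₂)
                * Real.sqrt (∫ p, ‖p.1 - p.2‖ ^ 2 ∂γ) := by
  refine ⟨18 * C, by positivity, ?_⟩
  intro V W V' W' hV hW hV' hW' _ μ₁ μ₂ hμ₁ _ hm₁ hm₂ hV₁ hV₂ hW₁ hW₂ γ hγ₁ hγ₂ _ hcost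
  have : IsProbabilityMeasure (γ.map Prod.fst) := hγ₁ ▸ hμ₁
  have : IsProbabilityMeasure γ := Measure.isProbabilityMeasure_of_map Prod.fst
  have hpotential := abs_integral_sub_integral_le_of_coupling hγ₁ hγ₂ hm₁ hm₂ hC.le
    (.of_hasGradientAt hV hV') hV₁ hV₂
  have hinteraction := abs_integral_interaction_sub_le_of_coupling hγ₁ hγ₂ hm₁ hm₂ hcost hC.le
    (.of_hasGradientAt hW hW') hW₁ hW₂
  obtain ⟨hpotential₁, hpotential₂⟩ := abs_le.mp hpotential
  obtain ⟨hinteraction₁, hinteraction₂⟩ := abs_le.mp hinteraction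
  exact abs_le.mpr ⟨by linarith, by linarith⟩
end

section
/- Let (μ_k)_{k≥0} be a sequence in 𝒫₂(ℝ^d) and τ > 0, n ∈ ℕ with nτ ≤ T. Suppose for some q' ∈ (0,1) and constants C > 0: (1/(2τ)) d_W²(μ_k, μ_{k+1}) + φ(μ_{k+1}) ≤ φ(μ_k) + Cτ(1 + m₂(μ_k)^{q'}) for all k, where φ is bounded below and m₂(μ_n) ≤ 2 m₂(μ₀) + 2 d_W²(μ₀, μ_n). Then there is C' (depending on C, T, μ₀, inf φ, φ(μ₀) but not on τ, n) such that m₂(μ_n) ≤ C', Σ_{k=0}^{n−1} d_W²(μ_k, μ_{k+1}) ≤ C'τ, and φ(μ_n) ≤ C'. -/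
/-!
Write `S k = ∑_{j<k} D_j²`. Summing the one-step energy inequalities gives
`S k ≤ 2τ (P0 - B) + 2Cτ² ∑_{j<k} (1 + m_j ^ q')`. Since `m_j ^ q' ≤ 1 + m_j` and, by the
triangle and Cauchy–Schwarz inequalities, `m_j ≤ 2 m_0 + 2 j S j`, this becomes the linear
recurrence `S k ≤ Aτ + 4Cnτ² ∑_{j<k} S j`, and the discrete Grönwall inequality together with
`nτ ≤ T` yields `S n ≤ Aτ exp (4CT²)`, uniformly in `τ` and `n`. Feeding this back into the moment
bound and into the summed energy inequality bounds `m n` and `φ n`.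
-/

open Finset Real

theorem rpow_le_one_add {q x : ℝ} (hq₀ : 0 ≤ q) (hq₁ : q ≤ 1) (hx : 0 ≤ x) : x ^ q ≤ 1 + x := by
  rcases le_total x 1 with h | h
  · linarith [rpow_le_one hx h hq₀]
  · linarith [(rpow_le_rpow_of_exponent_le h hq₁).trans_eq (rpow_one x)]

theorem sum_add_le_add_sum_of_add_succ_le {a c f : ℕ → ℝ} {n : ℕ}
    (h : ∀ k < n, a k + f (k + 1) ≤ f k + c k) {k : ℕ} (hk : k ≤ n) :
    ∑ j ∈ range k, a j + f k ≤ f 0 + ∑ j ∈ range k, c j := by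
  have hsum : ∑ j ∈ range k, (a j + (f (j + 1) - f j)) ≤ ∑ j ∈ range k, c j :=
    sum_le_sum fun j hj => by linarith [h j (by grind)]
  rw [sum_add_distrib, sum_range_sub] at hsum
  linarith

theorem le_mul_exp_of_le_add_mul_sum {u : ℕ → ℝ} {a b : ℝ} {n : ℕ} (ha : 0 ≤ a) (hb : 0 ≤ b)
    (h : ∀ k ≤ n, u k ≤ a + b * ∑ j ∈ range k, u j) {k : ℕ} (hk : k ≤ n) :
    u k ≤ a * exp (b * k) := by
  have hpow : ∀ k ≤ n, a + b * ∑ j ∈ range k, u j ≤ a * (1 + b) ^ k := by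
    intro k hk
    induction k with
    | zero => simp
    | succ k ih =>
      have hR := ih (by omega)
      have hu := mul_le_mul_of_nonneg_left (h k (by omega)) hb
      rw [sum_range_succ, pow_succ]
      nlinarith
  calc u k ≤ a * (1 + b) ^ k := (h k hk).trans (hpow k hk)
    _ ≤ a * exp b ^ k := by gcongr; linarith [add_one_le_exp b]
    _ = a * exp (b * k) := by rw [mul_comm b, exp_nat_mul]

theorem sq_le_card_mul_sum_sq_of_le_sum {w : ℝ} {D : ℕ → ℝ} {k : ℕ} (hw : 0 ≤ w)
    (h : w ≤ ∑ j ∈ range k, D j) : w ^ 2 ≤ k * ∑ j ∈ range k, D j ^ 2 := by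
  simpa using (pow_le_pow_left₀ hw h 2).trans sq_sum_le_card_mul_sum_sq

section EnergyInequality

variable {C q' τ T : ℝ} {n : ℕ} {m φ D : ℕ → ℝ}

theorem sum_sq_div_add_le_of_energy_step
    (hstep : ∀ k < n, 1 / (2 * τ) * D k ^ 2 + φ (k + 1) ≤ φ k + C * τ * (1 + m k ^ q'))
    {k : ℕ} (hk : k ≤ n) :
    (∑ j ∈ range k, D j ^ 2) / (2 * τ) + φ k ≤ φ 0 + C * τ * ∑ j ∈ range k, (1 + m j ^ q') := by
  have := sum_add_le_add_sum_of_add_succ_le hstep hk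
  rwa [← mul_sum, ← mul_sum, one_div_mul_eq_div] at this

theorem sum_sq_le_add_mul_sum_sum_sq {M P : ℝ} (hτ : 0 < τ) (hC : 0 ≤ C) (hq₀ : 0 ≤ q')
    (hq₁ : q' ≤ 1) (hM : 0 ≤ M) (hnτ : n * τ ≤ T) (hm₀ : ∀ k, 0 ≤ m k)
    (hφ : ∀ k ≤ n, φ 0 - φ k ≤ P) (hm : ∀ k ≤ n, m k ≤ M + 2 * k * ∑ j ∈ range k, D j ^ 2)
    (hstep : ∀ k < n, 1 / (2 * τ) * D k ^ 2 + φ (k + 1) ≤ φ k + C * τ * (1 + m k ^ q'))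
    {k : ℕ} (hk : k ≤ n) :
    ∑ j ∈ range k, D j ^ 2 ≤ 2 * (P + C * T * (2 + M)) * τ +
      4 * C * n * τ ^ 2 * ∑ j ∈ range k, ∑ i ∈ range j, D i ^ 2 := by
  have hgrowth : ∀ j ∈ range k, 1 + m j ^ q' ≤ (2 + M) + 2 * n * ∑ i ∈ range j, D i ^ 2 := by
    intro j hj
    have hjn : (j : ℝ) ≤ n := by exact_mod_cast (mem_range.1 hj).le.trans hk
    have hS : 0 ≤ ∑ i ∈ range j, D i ^ 2 := sum_nonneg fun i _ => sq_nonneg _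
    nlinarith [rpow_le_one_add hq₀ hq₁ (hm₀ j), hm j (by grind)]
  have hsum : ∑ j ∈ range k, (1 + m j ^ q') ≤
      k * (2 + M) + 2 * n * ∑ j ∈ range k, ∑ i ∈ range j, D i ^ 2 := by
    refine (sum_le_sum hgrowth).trans_eq ?_
    rw [sum_add_distrib, sum_const, card_range, nsmul_eq_mul, mul_sum]
  have hkτ : k * τ ≤ T := le_trans (by gcongr) hnτ
  have henergy := sum_sq_div_add_le_of_energy_step hstep hk
  rw [div_add' _ _ _ (by positivity), div_le_iff₀ (by positivity)] at henergy
  nlinarith [hφ k hk, mul_le_mul_of_nonneg_left hsum (by positivity : 0 ≤ 2 * C * τ ^ 2),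
    mul_le_mul_of_nonneg_left hkτ (by positivity : 0 ≤ 2 * C * τ * (2 + M))]

theorem sum_sq_le_mul_exp {M P : ℝ} (hτ : 0 < τ) (hC : 0 ≤ C) (hq₀ : 0 ≤ q')
    (hq₁ : q' ≤ 1) (hM : 0 ≤ M) (hP : 0 ≤ P) (hnτ : n * τ ≤ T) (hm₀ : ∀ k, 0 ≤ m k)
    (hφ : ∀ k ≤ n, φ 0 - φ k ≤ P) (hm : ∀ k ≤ n, m k ≤ M + 2 * k * ∑ j ∈ range k, D j ^ 2)
    (hstep : ∀ k < n, 1 / (2 * τ) * D k ^ 2 + φ (k + 1) ≤ φ k + C * τ * (1 + m k ^ q'))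
    {k : ℕ} (hk : k ≤ n) :
    ∑ j ∈ range k, D j ^ 2 ≤ 2 * (P + C * T * (2 + M)) * exp (4 * C * T ^ 2) * τ := by
  have hT : 0 ≤ T := (by positivity : (0 : ℝ) ≤ n * τ).trans hnτ
  have hkτ : k * τ ≤ T := le_trans (by gcongr) hnτ
  calc ∑ j ∈ range k, D j ^ 2
      ≤ 2 * (P + C * T * (2 + M)) * τ * exp (4 * C * n * τ ^ 2 * k) :=
        le_mul_exp_of_le_add_mul_sum (by positivity) (by positivity)
          (fun k hk => sum_sq_le_add_mul_sum_sum_sq hτ hC hq₀ hq₁ hM hnτ hm₀ hφ hm hstep hk) hk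
    _ ≤ 2 * (P + C * T * (2 + M)) * τ * exp (4 * C * T ^ 2) := by
        gcongr _ * exp ?_
        calc 4 * C * n * τ ^ 2 * k = 4 * C * (n * τ) * (k * τ) := by ring
          _ ≤ 4 * C * T * T := by gcongr
          _ = 4 * C * T ^ 2 := by ring
    _ = 2 * (P + C * T * (2 + M)) * exp (4 * C * T ^ 2) * τ := by ring

theorem energy_le_add_of_moment_le {R : ℝ} (hτ : 0 < τ) (hC : 0 ≤ C) (hq₀ : 0 ≤ q')
    (hq₁ : q' ≤ 1) (hR : 0 ≤ R) (hnτ : n * τ ≤ T) (hm₀ : ∀ k, 0 ≤ m k) (hm : ∀ k < n, m k ≤ R)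
    (hstep : ∀ k < n, 1 / (2 * τ) * D k ^ 2 + φ (k + 1) ≤ φ k + C * τ * (1 + m k ^ q')) :
    φ n ≤ φ 0 + C * T * (2 + R) := by
  have hsum : ∑ j ∈ range n, (1 + m j ^ q') ≤ n * (2 + R) := by
    have := sum_le_card_nsmul (range n) (fun j => 1 + m j ^ q') (2 + R) fun j hj => by
      linarith [rpow_le_one_add hq₀ hq₁ (hm₀ j), hm j (mem_range.1 hj)]
    rwa [card_range, nsmul_eq_mul] at this
  have hS : 0 ≤ (∑ j ∈ range n, D j ^ 2) / (2 * τ) := by positivity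
  nlinarith [sum_sq_div_add_le_of_energy_step hstep le_rfl,
    mul_le_mul_of_nonneg_left hsum (by positivity : 0 ≤ C * τ),
    mul_le_mul_of_nonneg_left hnτ (by positivity : 0 ≤ C * (2 + R))]

end EnergyInequality

theorem jko_uniform_bounds_general (C T q' M0 P0 B : ℝ) (hC : 0 < C)
    (hq : q' ∈ Set.Ioo (0 : ℝ) 1) :
    ∃ τ₀ > (0 : ℝ), ∃ C' > (0 : ℝ),
      ∀ (τ : ℝ) (n : ℕ) (m φ D Wd : ℕ → ℝ),
        0 < τ → τ ≤ τ₀ → (n : ℝ) * τ ≤ T →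
        (∀ k, 0 ≤ m k) → (∀ k, 0 ≤ D k) → (∀ k, 0 ≤ Wd k) →
        m 0 ≤ M0 → φ 0 ≤ P0 → (∀ k, B ≤ φ k) →
        (∀ k, k < n →
          (1 / (2 * τ)) * (D k) ^ 2 + φ (k + 1) ≤ φ k + C * τ * (1 + m k ^ q')) →
        (∀ k, k ≤ n → m k ≤ 2 * m 0 + 2 * (Wd k) ^ 2) →
        (∀ k, k ≤ n → Wd k ≤ ∑ j ∈ Finset.range k, D j) →
        m n ≤ C' ∧ (∑ k ∈ Finset.range n, (D k) ^ 2) ≤ C' * τ ∧ φ n ≤ C' := by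
  set A := 2 * (P0 - B + C * T * (2 + 2 * M0)) * exp (4 * C * T ^ 2)
  set R := 2 * M0 + 2 * T * A
  refine ⟨1, one_pos, max 1 (max R (max A (P0 + C * T * (2 + R)))), by positivity, ?_⟩
  intro τ n m φ D Wd hτ _ hnτ hm₀ _ hWd₀ hmM0 hφP0 hφB hstep hmW hWD
  have hM0 : 0 ≤ M0 := (hm₀ 0).trans hmM0
  have hP : 0 ≤ P0 - B := by linarith [hφB 0]
  have hT : 0 ≤ T := (by positivity : (0 : ℝ) ≤ n * τ).trans hnτ
  have hmom : ∀ k ≤ n, m k ≤ 2 * M0 + 2 * k * ∑ j ∈ range k, D j ^ 2 := fun k hk => by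
    nlinarith [hmW k hk, sq_le_card_mul_sum_sq_of_le_sum (hWd₀ k) (hWD k hk)]
  have hS : ∀ k ≤ n, ∑ j ∈ range k, D j ^ 2 ≤ A * τ := fun k hk =>
    sum_sq_le_mul_exp hτ hC.le hq.1.le hq.2.le (by positivity) hP hnτ hm₀
      (fun k _ => by linarith [hφB k]) hmom hstep hk
  have hm : ∀ k ≤ n, m k ≤ R := fun k hk => by
    have hkτ : k * τ ≤ T := le_trans (by gcongr) hnτ
    nlinarith [hmom k hk, hS k hk, mul_le_mul_of_nonneg_right hkτ (by positivity : 0 ≤ A)]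
  have hφ := energy_le_add_of_moment_le hτ hC.le hq.1.le hq.2.le (by positivity) hnτ hm₀
    (fun k hk => hm k hk.le) hstep
  refine ⟨(hm n le_rfl).trans ?_, (hS n le_rfl).trans ?_, hφ.trans ?_⟩
  · simp
  · gcongr; simp
  · exact le_max_of_le_right (le_max_of_le_right (le_max_of_le_right (by linarith)))

theorem jko_uniform_bounds (C T q' M0 P0 B : ℝ) (hC : 0 < C) (hT : 0 < T)
    (hq : q' ∈ Set.Ioo (0 : ℝ) 1) :
    ∃ τ₀ > (0 : ℝ), ∃ C' > (0 : ℝ),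
      ∀ (τ : ℝ) (n : ℕ) (m φ D Wd : ℕ → ℝ),
        0 < τ → τ ≤ τ₀ → (n : ℝ) * τ ≤ T →
        (∀ k, 0 ≤ m k) → (∀ k, 0 ≤ D k) → (∀ k, 0 ≤ Wd k) →
        m 0 ≤ M0 → φ 0 ≤ P0 → (∀ k, B ≤ φ k) →
        (∀ k, k < n →
          (1 / (2 * τ)) * (D k) ^ 2 + φ (k + 1) ≤ φ k + C * τ * (1 + m k ^ q')) →
        (∀ k, k ≤ n → m k ≤ 2 * m 0 + 2 * (Wd k) ^ 2) →
        (∀ k, k ≤ n → Wd k ≤ ∑ j ∈ Finset.range k, D j) →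
        m n ≤ C' ∧ (∑ k ∈ Finset.range n, (D k) ^ 2) ≤ C' * τ ∧ φ n ≤ C' :=
  jko_uniform_bounds_general C T q' M0 P0 B hC hq
end

section
/- In ℝ², let Ω = {(x,y) : y ≥ cos(2πx)}, V(x,y) = xy, and consider the boundary dynamics x'_t = ϑ(x_t) where ϑ(x) = −(cos(2πx) − 2πx sin(2πx))/(1 + 4π² sin²(2πx)). Then for every sufficiently large integer N, the equation 2πx = cot(2πx) has exactly two solutions in [N − 1/2, N + 1/2]: one, denoted (N)¹_*, near N − 1/2, and one, denoted (N)²_*, near N, and these are precisely the zeros of ϑ in that interval; moreover (N)¹_* − (N − 1/2) and (N)²_* − N are both of order 1/N. -/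
open Real

/-- The tangential boundary velocity for a delta mass sliding along the graph
`y = cos (2πx)` under the projected field `P(-∇V)` with `V(x,y) = xy`. -/
noncomputable def thetaField (x : ℝ) : ℝ :=
  -(Real.cos (2 * π * x) - 2 * π * x * Real.sin (2 * π * x)) /
    (1 + 4 * π ^ 2 * (Real.sin (2 * π * x)) ^ 2)

/-!
With `t = 2πx`, both `ϑ x = 0` (the denominator of `ϑ` is positive) and `t = cot t` say
`cos t = t sin t`, which fails where `sin t = 0`. On each interval `(c, c + π)` with `sin c = 0`
this equation has exactly one root: it exists by the intermediate value theorem applied to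
`cos (t - c) - t sin (t - c)`, which runs from `1` to `-1`, and it is unique because
`sin s sin t > 0` there. The offset `u = t - c ∈ (0, π)` satisfies `tan u = 1 / t`, hence
`1 / (2t) ≤ u < 1 / t`; for `x ∈ [N - 1/2, N + 1/2]` this is of order `1 / N`.
-/

open Set

lemma cos_ne_mul_sin_of_sin_eq_zero {t : ℝ} (h : sin t = 0) : cos t ≠ t * sin t := by
  intro hc
  have := sin_sq_add_cos_sq t
  simp_all

lemma cos_sub_eq_mul_sin_sub_iff {c : ℝ} (hc : sin c = 0) (t : ℝ) :
    cos (t - c) = t * sin (t - c) ↔ cos t = t * sin t := by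
  have hcos : cos c ≠ 0 := fun h ↦ by simpa [hc, h] using sin_sq_add_cos_sq c
  rw [cos_sub, sin_sub, hc, mul_zero, mul_zero, add_zero, sub_zero, ← mul_assoc,
    mul_left_inj' hcos]

lemma sin_mul_sin_pos_of_mem_Ioo {c s t : ℝ} (hc : sin c = 0) (hs : s ∈ Ioo c (c + π))
    (ht : t ∈ Ioo c (c + π)) : 0 < sin s * sin t := by
  have hcos : cos c ^ 2 = 1 := by simpa [hc] using sin_sq_add_cos_sq c
  have hs' := sin_pos_of_pos_of_lt_pi (sub_pos.2 hs.1) (by linarith [hs.2] : s - c < π)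
  have ht' := sin_pos_of_pos_of_lt_pi (sub_pos.2 ht.1) (by linarith [ht.2] : t - c < π)
  rw [sin_sub, hc, mul_zero, sub_zero] at hs' ht'
  nlinarith [mul_pos hs' ht']

/-- For two roots `sin (t - s) = (s - t) sin s sin t`, whose signs disagree unless `s = t`. -/
lemma eq_of_cos_eq_mul_sin {s t : ℝ} (hst : |t - s| < π) (hsin : 0 < sin s * sin t)
    (hs : cos s = s * sin s) (ht : cos t = t * sin t) : s = t := by
  have key : sin (t - s) = (s - t) * (sin s * sin t) := by rw [sin_sub, hs, ht]; ring
  rcases lt_trichotomy s t with hlt | heq | hgt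
  · nlinarith [sin_pos_of_pos_of_lt_pi (sub_pos.2 hlt) (abs_lt.1 hst).2]
  · exact heq
  · nlinarith [sin_neg_of_neg_of_neg_pi_lt (sub_neg.2 hgt) (abs_lt.1 hst).1]

lemma mem_Ico_of_cos_eq_mul_sin {t u : ℝ} (ht : 1 ≤ t) (hu : u ∈ Ioo 0 π)
    (h : cos u = t * sin u) : u ∈ Ico (1 / (2 * t)) (1 / t) := by
  have hsin := sin_pos_of_pos_of_lt_pi hu.1 hu.2
  have hcos : 0 < cos u := h ▸ by positivity
  have hu_half : u < π / 2 := by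
    by_contra! hge
    linarith [cos_nonpos_of_pi_div_two_le_of_le hge (by linarith [hu.2])]
  have htan : tan u = 1 / t := by
    rw [tan_eq_sin_div_cos, h]; field_simp
  have hlt : u < 1 / t := htan ▸ lt_tan hu.1 hu_half
  refine ⟨?_, hlt⟩
  have hu1 : u < 1 := hlt.trans_le (div_le_one_of_le₀ ht (by linarith))
  have hcos_half : 1 / 2 ≤ cos u := by nlinarith [one_sub_sq_div_two_le_cos (x := u), hu.1]
  rw [div_le_iff₀ (by linarith)]
  nlinarith [sin_lt hu.1]

lemma existsUnique_mem_Ioo_cos_eq_mul_sin {m : ℝ} (hm : sin (2 * π * m) = 0) :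
    ∃! x, x ∈ Ioo m (m + 1 / 2) ∧ cos (2 * π * x) = 2 * π * x * sin (2 * π * x) := by
  have hscale :
      ∀ {x}, x ∈ Ioo m (m + 1 / 2) → 2 * π * x ∈ Ioo (2 * π * m) (2 * π * m + π) :=
    fun hx ↦ ⟨by nlinarith [pi_pos, hx.1], by nlinarith [pi_pos, hx.2]⟩
  let f x := cos (2 * π * (x - m)) - 2 * π * x * sin (2 * π * (x - m))
  have hf_left : f m = 1 := by simp [f]
  have hf_right : f (m + 1 / 2) = -1 := by
    simp only [f, add_sub_cancel_left, show 2 * π * (1 / 2) = π by ring, cos_pi, sin_pi]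
    ring
  obtain ⟨x, hx, hfx⟩ := intermediate_value_Ioo' (by linarith : m ≤ m + 1 / 2)
    (f := f) (by fun_prop) (by rw [hf_left, hf_right]; norm_num : (0 : ℝ) ∈ _)
  have hx_root : cos (2 * π * x) = 2 * π * x * sin (2 * π * x) := by
    rw [← cos_sub_eq_mul_sin_sub_iff hm, ← mul_sub]
    exact sub_eq_zero.1 hfx
  refine ⟨x, ⟨hx, hx_root⟩, fun y ⟨hy, hy_root⟩ ↦ ?_⟩
  have hdist : |2 * π * x - 2 * π * y| < π :=
    abs_sub_lt_iff.2 ⟨by linarith [(hscale hx).2, (hscale hy).1],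
      by linarith [(hscale hx).1, (hscale hy).2]⟩
  have := eq_of_cos_eq_mul_sin hdist (sin_mul_sin_pos_of_mem_Ioo hm (hscale hy) (hscale hx))
    hy_root hx_root
  exact mul_left_cancel₀ (by positivity) this

lemma exists_pair_eq_setOf_cos_eq_mul_sin {m : ℝ} (hm : sin (2 * π * m) = 0) :
    ∃ a b, a ∈ Ioo m (m + 1 / 2) ∧ b ∈ Ioo (m + 1 / 2) (m + 1) ∧
      {x ∈ Icc m (m + 1) | cos (2 * π * x) = 2 * π * x * sin (2 * π * x)} = {a, b} := by
  have hm_half : sin (2 * π * (m + 1 / 2)) = 0 := by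
    rw [show 2 * π * (m + 1 / 2) = 2 * π * m + π by ring, sin_add_pi, hm, neg_zero]
  have hm_one : sin (2 * π * (m + 1)) = 0 := by
    rw [show 2 * π * (m + 1) = 2 * π * m + 2 * π by ring, sin_add_two_pi, hm]
  obtain ⟨a, ⟨ha, ha_root⟩, ha_unique⟩ := existsUnique_mem_Ioo_cos_eq_mul_sin hm
  obtain ⟨b, ⟨hb, hb_root⟩, hb_unique⟩ := existsUnique_mem_Ioo_cos_eq_mul_sin hm_half
  rw [add_assoc, add_halves] at hb hb_unique
  refine ⟨a, b, ha, hb, Set.ext fun x ↦ ⟨fun ⟨hx, hx_root⟩ ↦ ?_, ?_⟩⟩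
  · rcases lt_trichotomy x (m + 1 / 2) with hlt | rfl | hgt
    · refine .inl (ha_unique x ⟨⟨hx.1.lt_of_ne ?_, hlt⟩, hx_root⟩)
      rintro rfl
      exact cos_ne_mul_sin_of_sin_eq_zero hm hx_root
    · exact absurd hx_root (cos_ne_mul_sin_of_sin_eq_zero hm_half)
    · refine .inr (hb_unique x ⟨⟨hgt, hx.2.lt_of_ne ?_⟩, hx_root⟩)
      rintro rfl
      exact cos_ne_mul_sin_of_sin_eq_zero hm_one hx_root
  · rintro (rfl | rfl)
    · exact ⟨⟨ha.1.le, by linarith [ha.2]⟩, ha_root⟩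
    · exact ⟨⟨by linarith [hb.1], hb.2.le⟩, hb_root⟩

lemma abs_sub_mem_Icc_of_cos_eq_mul_sin {m x N : ℝ} (hm : sin (2 * π * m) = 0)
    (hx : x ∈ Ioo m (m + 1 / 2)) (hx_root : cos (2 * π * x) = 2 * π * x * sin (2 * π * x))
    (hN : 1 ≤ N) (hxN : N / 2 ≤ x) (hxN' : x ≤ 3 * N / 2) :
    |x - m| ∈ Icc (1 / (12 * π ^ 2) / N) (1 / (2 * π ^ 2) / N) := by
  have hpi := pi_gt_three
  have hpi_le : π ≤ 2 * π * x := by nlinarith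
  have hx_pos : 0 < 2 * π * x := by linarith
  obtain ⟨hlow, hupp⟩ := mem_Ico_of_cos_eq_mul_sin (t := 2 * π * x) (u := 2 * π * (x - m))
    (by linarith) ⟨by nlinarith [hx.1], by nlinarith [hx.2]⟩
    (by rwa [mul_sub, cos_sub_eq_mul_sin_sub_iff hm])
  rw [abs_of_pos (sub_pos.2 hx.1), div_div, div_div]
  rw [div_le_iff₀ (by positivity)] at hlow
  rw [lt_div_iff₀ hx_pos] at hupp
  constructor
  · rw [div_le_iff₀ (by positivity)]; nlinarith [hx.1]
  · rw [le_div_iff₀ (by positivity)]; nlinarith [hx.1]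

lemma thetaField_eq_zero_iff (x : ℝ) :
    thetaField x = 0 ↔ cos (2 * π * x) = 2 * π * x * sin (2 * π * x) := by
  rw [thetaField, div_eq_zero_iff, neg_eq_zero, sub_eq_zero, or_iff_left (by positivity)]

/-- `cot t = cos t / sin t` takes the junk value `0` where `sin t = 0`; `t ≠ 0` keeps such points
from solving `t = cot t`. -/
lemma eq_cot_iff_cos_eq_mul_sin {t : ℝ} (ht : t ≠ 0) : t = cot t ↔ cos t = t * sin t := by
  rw [cot_eq_cos_div_sin]
  by_cases hs : sin t = 0
  · exact iff_of_false (by simpa [hs] using ht) (cos_ne_mul_sin_of_sin_eq_zero hs)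
  · rw [eq_div_iff hs, eq_comm]

theorem equilibria_near_integers :
    ∃ c₁ > (0 : ℝ), ∃ c₂ > (0 : ℝ), ∃ N₀ : ℕ, ∀ N : ℕ, N₀ ≤ N →
      ∃ a b : ℝ, a ≠ b ∧
        {x ∈ Set.Icc ((N : ℝ) - 1 / 2) ((N : ℝ) + 1 / 2) |
          2 * π * x = Real.cot (2 * π * x)} = {a, b} ∧
        {x ∈ Set.Icc ((N : ℝ) - 1 / 2) ((N : ℝ) + 1 / 2) | thetaField x = 0}
          = {a, b} ∧
        c₁ / (N : ℝ) ≤ |a - ((N : ℝ) - 1 / 2)| ∧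
        |a - ((N : ℝ) - 1 / 2)| ≤ c₂ / (N : ℝ) ∧
        c₁ / (N : ℝ) ≤ |b - (N : ℝ)| ∧
        |b - (N : ℝ)| ≤ c₂ / (N : ℝ) := by
  refine ⟨1 / (12 * π ^ 2), by positivity, 1 / (2 * π ^ 2), by positivity, 1, fun N hN ↦ ?_⟩
  have hN : (1 : ℝ) ≤ N := by exact_mod_cast hN
  have hm : sin (2 * π * ((N : ℝ) - 1 / 2)) = 0 :=
    sin_eq_zero_iff.2 ⟨2 * N - 1, by push_cast; ring⟩
  have hN_zero : sin (2 * π * (N : ℝ)) = 0 := sin_eq_zero_iff.2 ⟨2 * N, by push_cast; ring⟩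
  obtain ⟨a, b, ha, hb, hroots⟩ := exists_pair_eq_setOf_cos_eq_mul_sin hm
  rw [sub_add_cancel] at hb
  rw [show (N : ℝ) - 1 / 2 + 1 = N + 1 / 2 by ring] at hb hroots
  have ha_root := (hroots.symm.subset (mem_insert a {b})).2
  have hb_root := (hroots.symm.subset (mem_insert_of_mem a rfl)).2
  refine ⟨a, b, (by linarith [ha.2, hb.1] : a < b).ne, ?_, ?_, ?_⟩
  · rw [← hroots]
    exact sep_ext_iff.2 fun x hx ↦
      eq_cot_iff_cos_eq_mul_sin (by nlinarith [pi_pos, hx.1])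
  · rw [← hroots]
    exact sep_ext_iff.2 fun x _ ↦ thetaField_eq_zero_iff x
  obtain ⟨ha_low, ha_upp⟩ := abs_sub_mem_Icc_of_cos_eq_mul_sin hm ha ha_root
    hN (by linarith [ha.1]) (by linarith [ha.2])
  obtain ⟨hb_low, hb_upp⟩ := abs_sub_mem_Icc_of_cos_eq_mul_sin hN_zero hb
    hb_root hN (by linarith [hb.1]) (by linarith [hb.2])
  exact ⟨ha_low, ha_upp, hb_low, hb_upp⟩
end
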